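/- For every n ≥ 0 and all z, w ∉ 𝕋 ∪ {β_j : j ∈ 𝕒_n} ∪ {α_j : j ∈ 𝕓_n}, the reproducing kernels satisfy k_n^α(z, w)·B̌_n^β(z)·conj(B̌_n^β(w)) = k_n(z, w) = k_n^β(z, w)·B̌_n^α(z)·conj(B̌_n^α(w)). -/

import Mathlib

noncomputable section
open MeasureTheory
open scoped Classical

namespace ORF

/-- complex conjugation -/
def conj' (z : ℂ) : ℂ := (starRingEnd ℂ) z

/-- membership in the unit circle 𝕋 -/
def onT (z : ℂ) : Prop := ‖z‖ = 1

/-- `z` is a (strictly) positive real number -/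
def posR (z : ℂ) : Prop := 0 < z.re ∧ z.im = 0

/-- σ_j = conj(α_j)/|α_j| (σ_j = 1 if α_j = 0, i.e. if β_j = ∞) -/
def sig (α : ℕ → ℂ) (j : ℕ) : ℂ :=
  if α j = 0 then 1 else conj' (α j) / ((‖α j‖ : ℝ) : ℂ)

/-- ς_n = ∏_{j=1}^n σ_j -/
def sigProd (α : ℕ → ℂ) (n : ℕ) : ℂ := ∏ j ∈ Finset.Icc 1 n, sig α j

/-- ϖ_j^α(z) = 1 − conj(α_j)·z, as a polynomial in z -/
def wA (α : ℕ → ℂ) (j : ℕ) : Polynomial ℂ :=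
  1 - Polynomial.C (conj' (α j)) * Polynomial.X

/-- ϖ_j^β(z) = 1 − conj(β_j)·z = 1 − z/α_j, and −z when β_j = ∞ (α_j = 0) -/
def wB (α : ℕ → ℂ) (j : ℕ) : Polynomial ℂ :=
  if α j = 0 then -Polynomial.X else 1 - Polynomial.C (α j)⁻¹ * Polynomial.X

/-- ϖ_j = ϖ_j^γ (γ_j = α_j when `c j`, γ_j = β_j otherwise) -/
def wG (α : ℕ → ℂ) (c : ℕ → Bool) (j : ℕ) : Polynomial ℂ :=
  if c j then wA α j else wB α j

/-- π_n^α -/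
def piA (α : ℕ → ℂ) (n : ℕ) : Polynomial ℂ := ∏ j ∈ Finset.Icc 1 n, wA α j
/-- π_n^β -/
def piB (α : ℕ → ℂ) (n : ℕ) : Polynomial ℂ := ∏ j ∈ Finset.Icc 1 n, wB α j
/-- π_n = π_n^γ -/
def piG (α : ℕ → ℂ) (c : ℕ → Bool) (n : ℕ) : Polynomial ℂ := ∏ j ∈ Finset.Icc 1 n, wG α c j

/-- 𝕒_n = {1 ≤ j ≤ n : γ_j = α_j} -/
def aSet (c : ℕ → Bool) (n : ℕ) : Finset ℕ := (Finset.Icc 1 n).filter (fun j => c j = true)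
/-- 𝕓_n = {1 ≤ j ≤ n : γ_j = β_j} -/
def bSet (c : ℕ → Bool) (n : ℕ) : Finset ℕ := (Finset.Icc 1 n).filter (fun j => c j = false)

/-- Blaschke factor ζ_j^α -/
def zetaA (α : ℕ → ℂ) (j : ℕ) (z : ℂ) : ℂ :=
  if α j = 0 then z else sig α j * (z - α j) / (1 - conj' (α j) * z)

/-- Blaschke factor ζ_j^β (β_j = 1/conj(α_j); ζ_j^β(z) = 1/z when β_j = ∞) -/
def zetaB (α : ℕ → ℂ) (j : ℕ) (z : ℂ) : ℂ :=
  if α j = 0 then z⁻¹ else sig α j * (z - (conj' (α j))⁻¹) / (1 - z / α j)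

/-- ζ_j = ζ_j^γ -/
def zetaG (α : ℕ → ℂ) (c : ℕ → Bool) (j : ℕ) (z : ℂ) : ℂ :=
  if c j then zetaA α j z else zetaB α j z

/-- B_n^α -/
def BA (α : ℕ → ℂ) (n : ℕ) (z : ℂ) : ℂ := ∏ j ∈ Finset.Icc 1 n, zetaA α j z
/-- B_n^β -/
def BB (α : ℕ → ℂ) (n : ℕ) (z : ℂ) : ℂ := ∏ j ∈ Finset.Icc 1 n, zetaB α j z
/-- B̌_n^α = ∏_{j ∈ 𝕒_n} ζ_j -/
def BcA (α : ℕ → ℂ) (c : ℕ → Bool) (n : ℕ) (z : ℂ) : ℂ := ∏ j ∈ aSet c n, zetaG α c j z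
/-- B̌_n^β = ∏_{j ∈ 𝕓_n} ζ_j -/
def BcB (α : ℕ → ℂ) (c : ℕ → Bool) (n : ℕ) (z : ℂ) : ℂ := ∏ j ∈ bSet c n, zetaG α c j z

/-- ζ̌_n^α (= ζ_n if γ_n = α_n, = 1 otherwise) -/
def zcA (α : ℕ → ℂ) (c : ℕ → Bool) (n : ℕ) (z : ℂ) : ℂ :=
  if c n then zetaG α c n z else 1
/-- ζ̌_n^β (= ζ_n if γ_n = β_n, = 1 otherwise) -/
def zcB (α : ℕ → ℂ) (c : ℕ → Bool) (n : ℕ) (z : ℂ) : ℂ :=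
  if c n then 1 else zetaG α c n z

/-- The space L_n^ν = {p/π_n^ν : deg p ≤ n}; a function `f` belongs to it if it agrees
with such a rational function on the unit circle (where all these objects live). -/
def Lsp (pip : ℕ → Polynomial ℂ) (n : ℕ) : Set (ℂ → ℂ) :=
  {f | ∃ p : Polynomial ℂ, p.natDegree ≤ n ∧ ∀ z, onT z → f z = p.eval z / (pip n).eval z}

/-- L_{n*}^ν = {f_* : f ∈ L_n^ν} (again as functions on the unit circle, where
f_*(z) = conj(f(1/conj z)) = conj(f(z))) -/
def LstarSp (pip : ℕ → Polynomial ℂ) (n : ℕ) : Set (ℂ → ℂ) :=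
  {f | ∃ p : Polynomial ℂ, p.natDegree ≤ n ∧ ∀ z, onT z → f z = conj' (p.eval z / (pip n).eval z)}

/-- R_n^ν = L_n^ν · L_{n*}^ν -/
def Rset (pip : ℕ → Polynomial ℂ) (n : ℕ) : Set (ℂ → ℂ) :=
  {h | ∃ g ∈ Lsp pip n, ∃ k ∈ LstarSp pip n, ∀ z, onT z → h z = g z * k z}

/-- the substar conjugate f_*(z) = conj(f(1/conj z)) -/
def substar (f : ℂ → ℂ) : ℂ → ℂ := fun z => conj' (f ((conj' z)⁻¹))

/-- superstar conjugate q^*(z) = z^n conj(q(1/conj z)) of a polynomial of degree ≤ n -/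
def pstar (n : ℕ) (q : Polynomial ℂ) : Polynomial ℂ :=
  ∑ k ∈ Finset.range (n + 1), Polynomial.C (conj' (q.coeff k)) * Polynomial.X ^ (n - k)

/-- the inner product ⟨f,g⟩ = ∫ conj(f) g dμ -/
def inn (μ : Measure ℂ) (f g : ℂ → ℂ) : ℂ := ∫ z, conj' (f z) * g z ∂μ

/-- the reciprocal ORF φ_n^{ν*} = B_n^ν (φ_n^ν)_* (resp. φ_n^* = B̌_n^α B̌_n^β (φ_n)_*),
written out as the rational function ς_n p_n^{ν*}/π_n^ν -/
def starF (α : ℕ → ℂ) (pip : ℕ → Polynomial ℂ) (p : ℕ → Polynomial ℂ) (n : ℕ) (z : ℂ) : ℂ :=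
  sigProd α n * (pstar n (p n)).eval z / (pip n).eval z

/-- `μ` is a probability measure on the unit circle 𝕋, positive a.e. on 𝕋 -/
structure CircleMeasure (μ : Measure ℂ) : Prop where
  prob : IsProbabilityMeasure μ
  circ : μ {z | ¬ onT z} = 0
  pos : ∀ U : Set ℂ, IsOpen U → (U ∩ {z | onT z}).Nonempty → 0 < μ U

/-- `φ` (with numerators `p`) is the sequence of orthonormal rational functions for the
nested spaces `Lsp pip`: φ_0 = 1, φ_n = p_n/π_n ∈ L_n \ L_{n-1}, φ_n ⊥ L_{n-1}, ‖φ_n‖ = 1. -/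
structure IsORF (μ : Measure ℂ) (pip : ℕ → Polynomial ℂ) (φ : ℕ → ℂ → ℂ)
    (p : ℕ → Polynomial ℂ) : Prop where
  rep : ∀ n z, φ n z = (p n).eval z / (pip n).eval z
  deg : ∀ n, (p n).natDegree ≤ n
  p0 : p 0 = 1
  notmem : ∀ n, 1 ≤ n → φ n ∉ Lsp pip (n - 1)
  orth : ∀ n, 1 ≤ n → ∀ f ∈ Lsp pip (n - 1), inn μ (φ n) f = 0
  norm : ∀ n, inn μ (φ n) (φ n) = 1

/-- normalization φ_n^{α*}(α_n) > 0 -/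
def normA (α : ℕ → ℂ) (p : ℕ → Polynomial ℂ) (n : ℕ) : Prop :=
  posR (sigProd α n * (pstar n (p n)).eval (α n) / (piA α n).eval (α n))

/-- normalization φ_n^{β*}(β_n) > 0 (when β_n = ∞ the value is the limit,
i.e. the ratio of the coefficients of z^n) -/
def normB (α : ℕ → ℂ) (p : ℕ → Polynomial ℂ) (n : ℕ) : Prop :=
  if α n = 0 then posR (sigProd α n * (pstar n (p n)).coeff n / (piB α n).coeff n)
  else posR (sigProd α n * (pstar n (p n)).eval ((conj' (α n))⁻¹) /
    (piB α n).eval ((conj' (α n))⁻¹))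

/-- π̌_n^α = ∏_{j∈𝕒_n} ϖ_j -/
def pidA (α : ℕ → ℂ) (c : ℕ → Bool) (n : ℕ) : Polynomial ℂ := ∏ j ∈ aSet c n, wA α j
/-- π̌_n^β = ∏_{j∈𝕓_n} ϖ_j -/
def pidB (α : ℕ → ℂ) (c : ℕ → Bool) (n : ℕ) : Polynomial ℂ := ∏ j ∈ bSet c n, wB α j
/-- ∏_{j∈𝕓_n}(z − β_j), a factor being −1 when β_j = ∞ -/
def dB (α : ℕ → ℂ) (c : ℕ → Bool) (n : ℕ) : Polynomial ℂ :=
  ∏ j ∈ bSet c n,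
    (if α j = 0 then (-1 : Polynomial ℂ) else Polynomial.X - Polynomial.C ((conj' (α j))⁻¹))
/-- ∏_{j∈𝕒_n}(z − α_j) -/
def dA (α : ℕ → ℂ) (c : ℕ → Bool) (n : ℕ) : Polynomial ℂ :=
  ∏ j ∈ aSet c n, (Polynomial.X - Polynomial.C (α j))

/-- ς̌_n^α = ∏_{j∈𝕒_n} σ_j -/
def sigcA (α : ℕ → ℂ) (c : ℕ → Bool) (n : ℕ) : ℂ := ∏ j ∈ aSet c n, sig α j
/-- ς̌_n^β = ∏_{j∈𝕓_n} σ_j -/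
def sigcB (α : ℕ → ℂ) (c : ℕ → Bool) (n : ℕ) : ℂ := ∏ j ∈ bSet c n, sig α j

/-- normalization for the γ-sequence: (φ_n^*/B̌_n^β)(α_n) > 0 when γ_n = α_n and
(φ_n^*/B̌_n^α)(β_n) > 0 when γ_n = β_n, written via the identities
φ_n^*/B̌_n^β = ς̌_n^α p_n^*/(π̌_n^α ∏_{j∈𝕓_n}(z−β_j)) and
φ_n^*/B̌_n^α = ς̌_n^β p_n^*/(π̌_n^β ∏_{j∈𝕒_n}(z−α_j)) (the value at β_n = ∞ being the
limit, i.e. the ratio of the coefficients of z^n). -/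
def normG (α : ℕ → ℂ) (c : ℕ → Bool) (p : ℕ → Polynomial ℂ) (n : ℕ) : Prop :=
  if c n then
    posR (sigcA α c n * (pstar n (p n)).eval (α n) /
      ((pidA α c n).eval (α n) * (dB α c n).eval (α n)))
  else if α n = 0 then
    posR (sigcB α c n * (pstar n (p n)).coeff n / ((pidB α c n) * dA α c n).coeff n)
  else
    posR (sigcB α c n * (pstar n (p n)).eval ((conj' (α n))⁻¹) /
      ((pidB α c n) * dA α c n).eval ((conj' (α n))⁻¹))

/-- the reproducing kernel k_n(z,w) = Σ_{k=0}^n φ_k(z) conj(φ_k(w)) -/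
def ker (φ : ℕ → ℂ → ℂ) (n : ℕ) (z w : ℂ) : ℂ :=
  ∑ k ∈ Finset.range (n + 1), φ k z * conj' (φ k w)

/-- evaluation of a polynomial of degree ≤ m at γ_j (its coefficient of z^m when γ_j = ∞) -/
def gEval (α : ℕ → ℂ) (c : ℕ → Bool) (m j : ℕ) (q : Polynomial ℂ) : ℂ :=
  if c j then q.eval (α j)
  else if α j = 0 then q.coeff m
  else q.eval ((conj' (α j))⁻¹)

/-- evaluation of a polynomial of degree ≤ m at β_j (its coefficient of z^m when β_j = ∞) -/
def bEval (α : ℕ → ℂ) (m j : ℕ) (q : Polynomial ℂ) : ℂ :=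
  if α j = 0 then q.coeff m else q.eval ((conj' (α j))⁻¹)

/-- η_n^α (the unimodular constant in the Szegő parameter λ_n^α) -/
def etaA (α : ℕ → ℂ) (p : ℕ → Polynomial ℂ) (n : ℕ) : ℂ :=
  conj' (sigProd α (n - 2)) * conj' ((pstar (n - 1) (p (n - 1))).eval (α (n - 1))) /
    ((pstar (n - 1) (p (n - 1))).eval (α (n - 1)))

/-- the Szegő parameter λ_n^α -/
def lamA (α : ℕ → ℂ) (p : ℕ → Polynomial ℂ) (n : ℕ) : ℂ :=
  etaA α p n * (p n).eval (α (n - 1)) / conj' ((pstar n (p n)).eval (α (n - 1)))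

/-- η_n^β -/
def etaB (α : ℕ → ℂ) (p : ℕ → Polynomial ℂ) (n : ℕ) : ℂ :=
  conj' (sigProd α (n - 2)) * conj' (bEval α (n - 1) (n - 1) (pstar (n - 1) (p (n - 1)))) /
    (bEval α (n - 1) (n - 1) (pstar (n - 1) (p (n - 1))))

/-- the Szegő parameter λ_n^β -/
def lamB (α : ℕ → ℂ) (p : ℕ → Polynomial ℂ) (n : ℕ) : ℂ :=
  etaB α p n * bEval α n (n - 1) (p n) / conj' (bEval α n (n - 1) (pstar n (p n)))

/-- η_n = η_n^γ -/
def etaG (α : ℕ → ℂ) (c : ℕ → Bool) (p : ℕ → Polynomial ℂ) (n : ℕ) : ℂ :=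
  conj' (sigProd α (n - 2)) * conj' (gEval α c (n - 1) (n - 1) (pstar (n - 1) (p (n - 1)))) /
    (gEval α c (n - 1) (n - 1) (pstar (n - 1) (p (n - 1))))

/-- the Szegő parameter λ_n = λ_n^γ -/
def lamG (α : ℕ → ℂ) (c : ℕ → Bool) (p : ℕ → Polynomial ℂ) (n : ℕ) : ℂ :=
  etaG α c p n * gEval α c n (n - 1) (p n) / conj' (gEval α c n (n - 1) (pstar n (p n)))

/-- functions of the second kind: ψ(z) = ∫ E(t,z) φ(t) − D(t,z) φ(z) dμ(t) -/
def psi (μ : Measure ℂ) (φ : ℂ → ℂ) (z : ℂ) : ℂ :=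
  ∫ t, (2 * t / (t - z)) * φ t - ((t + z) / (t - z)) * φ z ∂μ

/-- ∏_{j=k+1}^n ϖ_j -/
def tailProd (α : ℕ → ℂ) (c : ℕ → Bool) (n k : ℕ) : Polynomial ℂ :=
  ∏ j ∈ Finset.Icc (k + 1) n, wG α c j

/-- the numerator C_n(z,w) of the kernel k_n = C_n/(π_n(z) conj(π_n(w))), as a polynomial
in w after conjugation: C_n(z,w) = conj((CnPoly n z).eval w) -/
def CnPoly (α : ℕ → ℂ) (c : ℕ → Bool) (p : ℕ → Polynomial ℂ) (n : ℕ) (z : ℂ) : Polynomial ℂ :=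
  ∑ k ∈ Finset.range (n + 1),
    Polynomial.C (conj' ((p k).eval z * (tailProd α c n k).eval z)) * ((p k) * tailProd α c n k)

/-- z ↦ C_n(z,∞) (the coefficient of w^n of w ↦ C_n(z,w)), as a polynomial in z -/
def CnInf (α : ℕ → ℂ) (c : ℕ → Bool) (p : ℕ → Polynomial ℂ) (n : ℕ) : Polynomial ℂ :=
  ∑ k ∈ Finset.range (n + 1),
    ((p k) * tailProd α c n k) * Polynomial.C (conj' (((p k) * tailProd α c n k).coeff n))

/-- ϖ_n^*(z) = z − γ_n (= −1 when γ_n = ∞) -/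
def wstarG (α : ℕ → ℂ) (c : ℕ → Bool) (n : ℕ) : Polynomial ℂ :=
  if c n then Polynomial.X - Polynomial.C (α n)
  else if α n = 0 then -1
  else Polynomial.X - Polynomial.C ((conj' (α n))⁻¹)

end ORF

/-!
Multiplying the α-ORFs φ_0^α, …, φ_n^α by B̌_n^β, which is unimodular on 𝕋, keeps them
orthonormal, and turns each of them into a rational function q/π_n with deg q ≤ n: the factors
ϖ_j^α, j ∈ 𝕓_n, of the denominator π_n^α are traded for the ϖ_j^β of π_n. So φ_k^α B̌_n^β and
φ_k (k ≤ n) are two orthonormal bases of the same (n+1)-dimensional space of rational functions,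
and a sum Σ_k f(e_k) conj(g(e_k)) over an orthonormal basis, f and g linear, does not depend on
the basis. The β-side is symmetric.
-/

section KernelInvariance

open Module ComplexConjugate

variable {𝕜 V ι : Type*} [Field 𝕜] [AddCommGroup V] [Module 𝕜 V]
  [Fintype ι] [DecidableEq ι] {B : V → V →ₗ[𝕜] 𝕜} {q r : ι → V}

theorem linearIndependent_of_orthonormal (hq : ∀ i j, B (q i) (q j) = if i = j then 1 else 0) :
    LinearIndependent 𝕜 q := by
  rw [Fintype.linearIndependent_iff]
  intro g hg i
  simpa [hq] using congrArg (B (q i)) hg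

theorem sum_smul_eq_of_orthonormal [FiniteDimensional 𝕜 V]
    (hq : ∀ i j, B (q i) (q j) = if i = j then 1 else 0) (hcard : Fintype.card ι = finrank 𝕜 V)
    (v : V) : ∑ i, B (q i) v • q i = v := by
  set b := basisOfLinearIndependentOfCardEqFinrank' q (linearIndependent_of_orthonormal hq) hcard
  have hcoord : ∀ i, B (q i) v = b.repr v i := fun i => by
    conv_lhs => rw [← b.sum_repr v]
    simp [b, hq]
  simpa [hcoord, b] using b.sum_repr v

theorem sum_mul_conj_eq_of_orthonormal [StarRing 𝕜] [FiniteDimensional 𝕜 V]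
    (hB : ∀ x y, B y x = conj (B x y))
    (hq : ∀ i j, B (q i) (q j) = if i = j then 1 else 0)
    (hr : ∀ i j, B (r i) (r j) = if i = j then 1 else 0)
    (hcard : Fintype.card ι = finrank 𝕜 V) (f g : V →ₗ[𝕜] 𝕜) :
    ∑ k, f (r k) * conj (g (r k)) = ∑ j, f (q j) * conj (g (q j)) := by
  have hf : ∀ k, f (r k) = ∑ j, B (q j) (r k) * f (q j) := fun k => by
    conv_lhs => rw [← sum_smul_eq_of_orthonormal hq hcard (r k)]
    simp
  calc ∑ k, f (r k) * conj (g (r k))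
      = ∑ j, f (q j) * conj (g (∑ k, B (r k) (q j) • r k)) := by
        simp only [hf, Finset.sum_mul, map_sum, map_smul, smul_eq_mul, map_mul, hB _ (q _),
          Finset.mul_sum]
        rw [Finset.sum_comm]
        refine Finset.sum_congr rfl fun j _ => Finset.sum_congr rfl fun k _ => ?_
        ring
    _ = ∑ j, f (q j) * conj (g (q j)) := by
        simp only [sum_smul_eq_of_orthonormal hr hcard]

end KernelInvariance

namespace ORF

open Polynomial Finset

lemma conj'_inn (μ : Measure ℂ) (f g : ℂ → ℂ) : conj' (inn μ f g) = inn μ g f := by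
  simp only [inn, conj', ← integral_conj, map_mul, Complex.conj_conj, mul_comm]

lemma inn_congr_ae {μ : Measure ℂ} {f f' g g' : ℂ → ℂ} (hf : f =ᵐ[μ] f') (hg : g =ᵐ[μ] g') :
    inn μ f g = inn μ f' g' :=
  integral_congr_ae (by filter_upwards [hf, hg] with t hft hgt; rw [hft, hgt])

lemma ae_onT {μ : Measure ℂ} (hμT : μ {z | ¬ onT z} = 0) : ∀ᵐ t ∂μ, onT t := ae_iff.mpr hμT

lemma inn_mul_mul_of_norm_eq_one {μ : Measure ℂ} (hμT : μ {z | ¬ onT z} = 0) {b : ℂ → ℂ}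
    (hb : ∀ t, onT t → ‖b t‖ = 1) (f g : ℂ → ℂ) :
    inn μ (fun t => f t * b t) (fun t => g t * b t) = inn μ f g := by
  refine integral_congr_ae ?_
  filter_upwards [ae_onT hμT] with t ht
  calc conj' (f t * b t) * (g t * b t) = conj' (f t) * g t * (conj' (b t) * b t) := by
        simp only [conj', map_mul]; ring
    _ = conj' (f t) * g t := by simp [conj', Complex.conj_mul', hb t ht]

lemma mem_sphere_iff_onT {t : ℂ} : t ∈ Metric.sphere (0 : ℂ) 1 ↔ onT t :=
  mem_sphere_zero_iff_norm

section RationalFunctions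

variable {μ : Measure ℂ} [IsFiniteMeasure μ] {d : ℂ[X]}

theorem integrable_conj_mul_eval_div (hμT : μ {z | ¬ onT z} = 0)
    (hd : ∀ t, onT t → d.eval t ≠ 0) (p q : ℂ[X]) :
    Integrable (fun t => conj' (p.eval t / d.eval t) * (q.eval t / d.eval t)) μ := by
  have hcont : ContinuousOn (fun t => conj' (p.eval t / d.eval t) * (q.eval t / d.eval t))
      (Metric.sphere 0 1) := by
    have hd' : ∀ t ∈ Metric.sphere (0 : ℂ) 1, d.eval t ≠ 0 := fun t ht =>
      hd t (mem_sphere_iff_onT.mp ht)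
    unfold conj'
    fun_prop (disch := assumption)
  obtain ⟨C, hC⟩ := (isCompact_sphere (0 : ℂ) 1).exists_bound_of_continuousOn hcont
  have hmeas : Measurable fun t => conj' (p.eval t / d.eval t) * (q.eval t / d.eval t) :=
    (Complex.continuous_conj.measurable.comp (by fun_prop)).mul (by fun_prop)
  refine Integrable.of_bound hmeas.aestronglyMeasurable C ?_
  filter_upwards [ae_onT hμT] with t ht using hC t (mem_sphere_iff_onT.mpr ht)

theorem sum_eval_mul_conj_eq_of_orthonormal (hμT : μ {z | ¬ onT z} = 0)
    (hd : ∀ t, onT t → d.eval t ≠ 0) {n : ℕ} {q r : Fin (n + 1) → ℂ[X]}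
    (hqdeg : ∀ j, (q j).natDegree ≤ n) (hrdeg : ∀ k, (r k).natDegree ≤ n)
    (hq : ∀ i j, inn μ (fun t => (q i).eval t / d.eval t) (fun t => (q j).eval t / d.eval t)
      = if i = j then 1 else 0)
    (hr : ∀ i j, inn μ (fun t => (r i).eval t / d.eval t) (fun t => (r j).eval t / d.eval t)
      = if i = j then 1 else 0) (z w : ℂ) :
    ∑ k, (r k).eval z * conj' ((r k).eval w) = ∑ j, (q j).eval z * conj' ((q j).eval w) := by
  let V := degreeLT ℂ (n + 1)
  have hmem : ∀ p : ℂ[X], p.natDegree ≤ n → p ∈ V := fun p hp =>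
    mem_degreeLT.mpr ((degree_le_of_natDegree_le hp).trans_lt (by exact_mod_cast n.lt_succ_self))
  let B : V → V →ₗ[ℂ] ℂ := fun p =>
    { toFun := fun p' => inn μ (fun t => (p : ℂ[X]).eval t / d.eval t)
        (fun t => (p' : ℂ[X]).eval t / d.eval t)
      map_add' := fun p₁ p₂ => by
        simp only [inn, Submodule.coe_add, eval_add, add_div, mul_add]
        exact integral_add (integrable_conj_mul_eval_div hμT hd _ _)
          (integrable_conj_mul_eval_div hμT hd _ _)
      map_smul' := fun a p' => by
        simp only [inn, SetLike.val_smul, eval_smul, smul_eq_mul, RingHom.id_apply,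
          ← integral_const_mul]
        congr 1 with t
        ring }
  have : FiniteDimensional ℂ V := (degreeLTEquiv ℂ (n + 1)).symm.finiteDimensional
  have hcard : Fintype.card (Fin (n + 1)) = Module.finrank ℂ V := by
    rw [(degreeLTEquiv ℂ (n + 1)).finrank_eq]; simp
  exact sum_mul_conj_eq_of_orthonormal (B := B) (q := fun j => ⟨q j, hmem _ (hqdeg j)⟩)
    (r := fun k => ⟨r k, hmem _ (hrdeg k)⟩) (fun x y => (conj'_inn μ _ _).symm) hq hr hcard
    ((leval z).comp V.subtype) ((leval w).comp V.subtype)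

end RationalFunctions

section Kernels

variable {μ : Measure ℂ}

lemma ker_mul (φ : ℕ → ℂ → ℂ) (b : ℂ → ℂ) (n : ℕ) (z w : ℂ) :
    ker (fun k t => φ k t * b t) n z w = ker φ n z w * b z * conj' (b w) := by
  simp only [ker, sum_mul, conj', map_mul]
  exact sum_congr rfl fun k _ => by ring

lemma ker_eq_sum_div {φ : ℕ → ℂ → ℂ} {q : ℕ → ℂ[X]} {d : ℂ[X]} {n : ℕ} {S : Set ℂ}
    (hφ : ∀ k ≤ n, Set.EqOn (φ k) (fun t => (q k).eval t / d.eval t) S) {z w : ℂ}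
    (hz : z ∈ S) (hw : w ∈ S) :
    ker φ n z w = (∑ k : Fin (n + 1), (q k).eval z * conj' ((q k).eval w))
      / (d.eval z * conj' (d.eval w)) := by
  rw [ker, ← Fin.sum_univ_eq_sum_range, sum_div]
  refine sum_congr rfl fun k _ => ?_
  rw [hφ k k.is_le hz, hφ k k.is_le hw, conj', map_div₀, div_mul_div_comm]
  rfl

lemma inn_eval_div_eq_ite_of_eqOn (hμT : μ {z | ¬ onT z} = 0) {d : ℂ[X]} {n : ℕ}
    {φ : ℕ → ℂ → ℂ} {q : ℕ → ℂ[X]} (hφ : ∀ j l, inn μ (φ j) (φ l) = if j = l then 1 else 0)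
    {S : Set ℂ} (hS : {t | onT t} ⊆ S)
    (hφS : ∀ k ≤ n, Set.EqOn (φ k) (fun t => (q k).eval t / d.eval t) S) (i j : Fin (n + 1)) :
    inn μ (fun t => (q i).eval t / d.eval t) (fun t => (q j).eval t / d.eval t)
      = if i = j then 1 else 0 := by
  have hae : ∀ k : Fin (n + 1), φ k =ᵐ[μ] fun t => (q k).eval t / d.eval t := fun k =>
    (ae_onT hμT).mono fun t ht => hφS k k.is_le (hS ht)
  rw [← inn_congr_ae (hae i) (hae j), hφ]
  simp only [Fin.val_inj]

theorem ker_eq_of_eqOn [IsFiniteMeasure μ] (hμT : μ {z | ¬ onT z} = 0) {d : ℂ[X]}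
    (hd : ∀ t, onT t → d.eval t ≠ 0) {n : ℕ} {φ χ : ℕ → ℂ → ℂ} {q r : ℕ → ℂ[X]}
    (hqdeg : ∀ k ≤ n, (q k).natDegree ≤ n) (hrdeg : ∀ k ≤ n, (r k).natDegree ≤ n)
    (hφ : ∀ j l, inn μ (φ j) (φ l) = if j = l then 1 else 0)
    (hχ : ∀ j l, inn μ (χ j) (χ l) = if j = l then 1 else 0) {S : Set ℂ}
    (hS : {t | onT t} ⊆ S)
    (hφS : ∀ k ≤ n, Set.EqOn (φ k) (fun t => (q k).eval t / d.eval t) S)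
    (hχS : ∀ k ≤ n, Set.EqOn (χ k) (fun t => (r k).eval t / d.eval t) S) {z w : ℂ}
    (hz : z ∈ S) (hw : w ∈ S) : ker φ n z w = ker χ n z w := by
  rw [ker_eq_sum_div hφS hz hw, ker_eq_sum_div hχS hz hw,
    sum_eval_mul_conj_eq_of_orthonormal hμT hd (fun k => hqdeg k k.is_le)
      (fun k => hrdeg k k.is_le) (inn_eval_div_eq_ite_of_eqOn hμT hφ hS hφS)
      (inn_eval_div_eq_ite_of_eqOn hμT hχ hS hχS)]

end Kernels

section ProductDenominators

variable {w : ℕ → ℂ[X]}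

lemma eval_prod_ne_zero_iff {s : Finset ℕ} {t : ℂ} :
    (∏ i ∈ s, w i).eval t ≠ 0 ↔ ∀ i ∈ s, (w i).eval t ≠ 0 := by
  rw [eval_prod, prod_ne_zero_iff]

lemma natDegree_prod_le_card (hw : ∀ i, (w i).natDegree ≤ 1) (s : Finset ℕ) :
    (∏ i ∈ s, w i).natDegree ≤ s.card :=
  (natDegree_prod_le s w).trans (by simpa using sum_le_sum fun i (_ : i ∈ s) => hw i)

lemma prod_Icc_eq_prod_Icc_mul_prod_Ioc {M : Type*} [CommMonoid M] (f : ℕ → M) {j n : ℕ}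
    (hj : j ≤ n) : ∏ i ∈ Icc 1 n, f i = (∏ i ∈ Icc 1 j, f i) * ∏ i ∈ Ioc j n, f i := by
  have hIcc : ∀ m, Icc 1 m = Ioc 0 m := fun m => Icc_add_one_left_eq_Ioc 0 m
  rw [hIcc, hIcc, prod_Ioc_consecutive f (Nat.zero_le j) hj]

lemma natDegree_mul_prod_Ioc_le (hw : ∀ i, (w i).natDegree ≤ 1) {p : ℂ[X]} {j n : ℕ}
    (hp : p.natDegree ≤ j) (hj : j ≤ n) : (p * ∏ i ∈ Ioc j n, w i).natDegree ≤ n := by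
  have := natDegree_prod_le_card hw (Ioc j n)
  rw [Nat.card_Ioc] at this
  exact natDegree_mul_le.trans (by omega)

lemma natDegree_C_mul_mul_prod_Ioc_le (hw : ∀ i, (w i).natDegree ≤ 1) (a : ℂ) {p : ℂ[X]}
    {j n : ℕ} (hp : p.natDegree ≤ j) (hj : j ≤ n) :
    (C a * (p * ∏ i ∈ Ioc j n, w i)).natDegree ≤ n :=
  (natDegree_C_mul_le _ _).trans (natDegree_mul_prod_Ioc_le hw hp hj)

lemma eval_mul_prod_Ioc_div_prod_Icc {j n : ℕ} (hj : j ≤ n) (p : ℂ[X]) {t : ℂ}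
    (ht : (∏ i ∈ Icc 1 n, w i).eval t ≠ 0) :
    (p * ∏ i ∈ Ioc j n, w i).eval t / (∏ i ∈ Icc 1 n, w i).eval t
      = p.eval t / (∏ i ∈ Icc 1 j, w i).eval t := by
  rw [prod_Icc_eq_prod_Icc_mul_prod_Ioc w hj, eval_mul] at ht ⊢
  rw [eval_mul, mul_div_mul_right _ _ (right_ne_zero_of_mul ht)]

lemma mem_Lsp_of_le (hw1 : ∀ i, (w i).natDegree ≤ 1) (hwT : ∀ i t, onT t → (w i).eval t ≠ 0)
    {φ : ℕ → ℂ → ℂ} {p : ℕ → ℂ[X]}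
    (hrep : ∀ k t, φ k t = (p k).eval t / (∏ i ∈ Icc 1 k, w i).eval t)
    (hdeg : ∀ k, (p k).natDegree ≤ k) {j m : ℕ} (hjm : j ≤ m) :
    φ j ∈ Lsp (fun k => ∏ i ∈ Icc 1 k, w i) m := by
  refine ⟨p j * ∏ i ∈ Ioc j m, w i, natDegree_mul_prod_Ioc_le hw1 (hdeg j) hjm, fun t ht => ?_⟩
  rw [hrep, eval_mul_prod_Ioc_div_prod_Icc hjm _
    (eval_prod_ne_zero_iff.mpr fun i _ => hwT i t ht)]

theorem IsORF.inn_eq_ite {μ : Measure ℂ} {φ : ℕ → ℂ → ℂ} {p : ℕ → ℂ[X]}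
    (hO : IsORF μ (fun k => ∏ i ∈ Icc 1 k, w i) φ p) (hw1 : ∀ i, (w i).natDegree ≤ 1)
    (hwT : ∀ i t, onT t → (w i).eval t ≠ 0) (j l : ℕ) :
    inn μ (φ j) (φ l) = if j = l then 1 else 0 := by
  rcases lt_trichotomy j l with hjl | rfl | hlj
  · rw [if_neg hjl.ne, ← conj'_inn, hO.orth l (by omega) _
      (mem_Lsp_of_le hw1 hwT hO.rep hO.deg (by omega : j ≤ l - 1))]
    simp [conj']
  · simpa using hO.norm j
  · rw [if_neg hlj.ne', hO.orth j (by omega) _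
      (mem_Lsp_of_le hw1 hwT hO.rep hO.deg (by omega : l ≤ j - 1))]

end ProductDenominators

section Factors

variable {α : ℕ → ℂ} {j : ℕ} {t : ℂ}

lemma wA_natDegree_le (α : ℕ → ℂ) (j : ℕ) : (wA α j).natDegree ≤ 1 := by
  unfold wA; compute_degree

lemma wB_natDegree_le (α : ℕ → ℂ) (j : ℕ) : (wB α j).natDegree ≤ 1 := by
  unfold wB; split_ifs <;> compute_degree

lemma wG_natDegree_le (α : ℕ → ℂ) (c : ℕ → Bool) (j : ℕ) : (wG α c j).natDegree ≤ 1 := by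
  unfold wG; split_ifs
  exacts [wA_natDegree_le α j, wB_natDegree_le α j]

lemma mul_conj'_self (a : ℂ) : a * conj' a = (‖a‖ : ℂ) ^ 2 := Complex.mul_conj' a

lemma norm_one_sub_conj'_mul_of_onT (a : ℂ) {t : ℂ} (ht : onT t) :
    ‖1 - conj' a * t‖ = ‖t - a‖ := by
  have h1 : 1 - conj' a * t = t * conj' (t - a) := by
    have := mul_conj'_self t
    rw [show ‖t‖ = 1 from ht, Complex.ofReal_one, one_pow] at this
    simp only [conj', map_sub] at this ⊢
    linear_combination -this
  rw [h1, norm_mul, show ‖t‖ = 1 from ht, one_mul, conj', Complex.norm_conj]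

lemma sub_ne_zero_of_onT (hα : ‖α j‖ < 1) (ht : onT t) : t - α j ≠ 0 := by
  intro h
  rw [← sub_eq_zero.mp h, show ‖t‖ = 1 from ht] at hα
  exact lt_irrefl _ hα

lemma wA_eval_ne_zero_of_onT (hα : ‖α j‖ < 1) (ht : onT t) : (wA α j).eval t ≠ 0 := by
  rw [← norm_ne_zero_iff]
  simpa [wA, norm_one_sub_conj'_mul_of_onT _ ht] using sub_ne_zero_of_onT hα ht

lemma wB_eval_ne_zero_of_onT (hα : ‖α j‖ < 1) (ht : onT t) : (wB α j).eval t ≠ 0 := by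
  unfold wB
  split_ifs with h
  · rintro h0
    simp_all [onT]
  · have : 1 - (α j)⁻¹ * t = -(α j)⁻¹ * (t - α j) := by field_simp; ring
    simpa [this, h] using sub_ne_zero_of_onT hα ht

lemma wG_eval_ne_zero_of_onT (hα : ‖α j‖ < 1) (c : ℕ → Bool) (ht : onT t) :
    (wG α c j).eval t ≠ 0 := by
  unfold wG; split_ifs
  exacts [wA_eval_ne_zero_of_onT hα ht, wB_eval_ne_zero_of_onT hα ht]

end Factors

section Blaschke

variable {α : ℕ → ℂ} {j : ℕ}

def zetaConst (α : ℕ → ℂ) (j : ℕ) : ℂ := if α j = 0 then -1 else -(‖α j‖ : ℂ)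

-- No hypothesis is needed: at a pole both sides are `0`, since `x / 0 = 0`.
lemma zetaA_eq (α : ℕ → ℂ) (j : ℕ) (z : ℂ) :
    zetaA α j z = zetaConst α j * ((wB α j).eval z / (wA α j).eval z) := by
  unfold zetaA zetaConst
  split_ifs with h
  · simp [wA, wB, h, conj']
  · simp only [wA, wB, sig, if_neg h, eval_sub, eval_one, eval_mul, eval_C, eval_X]
    by_cases hA : 1 - conj' (α j) * z = 0
    · simp [hA]
    · have hn : (‖α j‖ : ℂ) ≠ 0 := by simpa using h
      field_simp
      linear_combination (z - α j) * mul_conj'_self (α j)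

lemma zetaB_eq (α : ℕ → ℂ) (j : ℕ) (z : ℂ) :
    zetaB α j z = (zetaConst α j)⁻¹ * ((wA α j).eval z / (wB α j).eval z) := by
  unfold zetaB zetaConst
  split_ifs with h
  · simp [wA, wB, h, conj']
  · simp only [wA, wB, sig, if_neg h, eval_sub, eval_one, eval_mul, eval_C, eval_X]
    by_cases hB : 1 - (α j)⁻¹ * z = 0
    · have : 1 - z / α j = 0 := by rw [div_eq_inv_mul]; exact hB
      simp [hB, this]
    · have hn : (‖α j‖ : ℂ) ≠ 0 := by simpa using h
      have hc : conj' (α j) ≠ 0 := by simpa [conj'] using h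
      field_simp
      ring

lemma zetaB_eq_inv_zetaA (α : ℕ → ℂ) (j : ℕ) (z : ℂ) : zetaB α j z = (zetaA α j z)⁻¹ := by
  rw [zetaA_eq, zetaB_eq, mul_inv, inv_div]

lemma norm_zetaA_of_onT (hα : ‖α j‖ < 1) {t : ℂ} (ht : onT t) : ‖zetaA α j t‖ = 1 := by
  unfold zetaA
  split_ifs with h
  · exact ht
  · have hsig : ‖sig α j‖ = 1 := by simp [sig, h, conj']
    rw [norm_div, norm_mul, hsig, one_mul, norm_one_sub_conj'_mul_of_onT _ ht,
      div_self (norm_ne_zero_iff.mpr (sub_ne_zero_of_onT hα ht))]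

lemma norm_zetaB_of_onT (hα : ‖α j‖ < 1) {t : ℂ} (ht : onT t) : ‖zetaB α j t‖ = 1 := by
  rw [zetaB_eq_inv_zetaA, norm_inv, norm_zetaA_of_onT hα ht, inv_one]

end Blaschke

section Sequences

variable {α : ℕ → ℂ} {c : ℕ → Bool} {n : ℕ}

lemma disjoint_aSet_bSet (c : ℕ → Bool) (n : ℕ) : Disjoint (aSet c n) (bSet c n) :=
  disjoint_filter.mpr fun i _ h => by simp [h]

lemma aSet_union_bSet (c : ℕ → Bool) (n : ℕ) : aSet c n ∪ bSet c n = Icc 1 n := by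
  ext i; cases h : c i <;> simp [aSet, bSet, h]

lemma piG_eq (α : ℕ → ℂ) (c : ℕ → Bool) (n : ℕ) :
    piG α c n = (∏ i ∈ aSet c n, wA α i) * ∏ i ∈ bSet c n, wB α i := by
  rw [piG, ← aSet_union_bSet, prod_union (disjoint_aSet_bSet c n)]
  congr 1 <;> refine prod_congr rfl fun i hi => ?_ <;> simp [wG, (mem_filter.mp hi).2]

lemma BcA_eq (α : ℕ → ℂ) (c : ℕ → Bool) (n : ℕ) (z : ℂ) :
    BcA α c n z = ∏ i ∈ aSet c n, zetaConst α i * ((wB α i).eval z / (wA α i).eval z) :=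
  prod_congr rfl fun i hi => by rw [zetaG, if_pos (mem_filter.mp hi).2, zetaA_eq]

lemma BcB_eq (α : ℕ → ℂ) (c : ℕ → Bool) (n : ℕ) (z : ℂ) :
    BcB α c n z = ∏ i ∈ bSet c n, (zetaConst α i)⁻¹ * ((wA α i).eval z / (wB α i).eval z) :=
  prod_congr rfl fun i hi => by simp [zetaG, (mem_filter.mp hi).2, zetaB_eq]

lemma norm_BcA_of_onT (hα : ∀ j, ‖α j‖ < 1) {t : ℂ} (ht : onT t) : ‖BcA α c n t‖ = 1 := by
  rw [BcA, norm_prod]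
  exact prod_eq_one fun i hi => by
    rw [zetaG, if_pos (mem_filter.mp hi).2, norm_zetaA_of_onT (hα i) ht]

lemma norm_BcB_of_onT (hα : ∀ j, ‖α j‖ < 1) {t : ℂ} (ht : onT t) : ‖BcB α c n t‖ = 1 := by
  rw [BcB, norm_prod]
  exact prod_eq_one fun i hi => by
    simp [zetaG, (mem_filter.mp hi).2, norm_zetaB_of_onT (hα i) ht]

end Sequences

section Numerators

lemma eval_div_mul_prod_eq {u v : ℕ → ℂ[X]} {κ : ℕ → ℂ} {a b : Finset ℕ} {j n : ℕ}
    (hab : Disjoint a b) (hunion : a ∪ b = Icc 1 n) (hj : j ≤ n) (p : ℂ[X]) {t : ℂ}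
    (hu : (∏ i ∈ Icc 1 n, u i).eval t ≠ 0) (hv : ∀ i ∈ b, (v i).eval t ≠ 0) :
    p.eval t / (∏ i ∈ Icc 1 j, u i).eval t * ∏ i ∈ b, κ i * ((u i).eval t / (v i).eval t)
      = (C (∏ i ∈ b, κ i) * (p * ∏ i ∈ Ioc j n, u i)).eval t
        / ((∏ i ∈ a, u i) * ∏ i ∈ b, v i).eval t := by
  rw [← eval_mul_prod_Ioc_div_prod_Icc hj p hu, ← hunion, prod_union hab]
  rw [← hunion, prod_union hab] at hu
  have hvb : ∏ i ∈ b, (v i).eval t ≠ 0 := prod_ne_zero_iff.mpr hv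
  simp only [eval_mul, eval_C, eval_prod, prod_mul_distrib, prod_div_distrib] at hu ⊢
  field_simp [left_ne_zero_of_mul hu, right_ne_zero_of_mul hu, hvb]

variable {α : ℕ → ℂ} {c : ℕ → Bool} {n j : ℕ} {φ : ℕ → ℂ → ℂ} {p : ℕ → ℂ[X]} {t : ℂ}

lemma mul_BcB_eq_eval_div (hrep : ∀ k t, φ k t = (p k).eval t / (piA α k).eval t) (hj : j ≤ n)
    (hA : (piA α n).eval t ≠ 0) (hB : (piB α n).eval t ≠ 0) :
    φ j t * BcB α c n t = (C (∏ i ∈ bSet c n, (zetaConst α i)⁻¹)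
      * (p j * ∏ i ∈ Ioc j n, wA α i)).eval t / (piG α c n).eval t := by
  rw [hrep, BcB_eq, piG_eq]
  exact eval_div_mul_prod_eq (disjoint_aSet_bSet c n) (aSet_union_bSet c n) hj (p j) hA
    fun i hi => eval_prod_ne_zero_iff.mp hB i (mem_filter.mp hi).1

lemma mul_BcA_eq_eval_div (hrep : ∀ k t, φ k t = (p k).eval t / (piB α k).eval t) (hj : j ≤ n)
    (hA : (piA α n).eval t ≠ 0) (hB : (piB α n).eval t ≠ 0) :
    φ j t * BcA α c n t = (C (∏ i ∈ aSet c n, zetaConst α i)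
      * (p j * ∏ i ∈ Ioc j n, wB α i)).eval t / (piG α c n).eval t := by
  rw [hrep, BcA_eq, piG_eq, mul_comm (∏ i ∈ aSet c n, wA α i)]
  exact eval_div_mul_prod_eq (disjoint_aSet_bSet c n).symm
    (by rw [union_comm, aSet_union_bSet]) hj (p j) hB
    fun i hi => eval_prod_ne_zero_iff.mp hA i (mem_filter.mp hi).1

variable {μ : Measure ℂ}

lemma IsORF.inn_mul_BcB_eq_ite (hμT : μ {z | ¬ onT z} = 0) (hα : ∀ j, ‖α j‖ < 1)
    (hA : IsORF μ (piA α) φ p) (j l : ℕ) :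
    inn μ (fun t => φ j t * BcB α c n t) (fun t => φ l t * BcB α c n t)
      = if j = l then 1 else 0 :=
  (inn_mul_mul_of_norm_eq_one hμT (fun _ ht => norm_BcB_of_onT hα ht) _ _).trans
    (hA.inn_eq_ite (wA_natDegree_le α) (fun i _ ht => wA_eval_ne_zero_of_onT (hα i) ht) j l)

lemma IsORF.inn_mul_BcA_eq_ite (hμT : μ {z | ¬ onT z} = 0) (hα : ∀ j, ‖α j‖ < 1)
    (hB : IsORF μ (piB α) φ p) (j l : ℕ) :
    inn μ (fun t => φ j t * BcA α c n t) (fun t => φ l t * BcA α c n t)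
      = if j = l then 1 else 0 :=
  (inn_mul_mul_of_norm_eq_one hμT (fun _ ht => norm_BcA_of_onT hα ht) _ _).trans
    (hB.inn_eq_ite (wB_natDegree_le α) (fun i _ ht => wB_eval_ne_zero_of_onT (hα i) ht) j l)

end Numerators

end ORF

open ORF MeasureTheory

theorem stmt8_general (α : ℕ → ℂ) (hα : ∀ j, ‖α j‖ < 1)
    (c : ℕ → Bool) (μ : Measure ℂ) (hμ : CircleMeasure μ)
    (φA φB φG : ℕ → ℂ → ℂ) (pA pB pG : ℕ → Polynomial ℂ)
    (hA : IsORF μ (piA α) φA pA) (hB : IsORF μ (piB α) φB pB)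
    (hG : IsORF μ (piG α c) φG pG)
    (n : ℕ) (z w : ℂ)
    (hzA : (piA α n).eval z ≠ 0) (hwA : (piA α n).eval w ≠ 0)
    (hzB : (piB α n).eval z ≠ 0) (hwB : (piB α n).eval w ≠ 0)
    (hzG : (piG α c n).eval z ≠ 0) (hwG : (piG α c n).eval w ≠ 0) :
    ker φA n z w * BcB α c n z * conj' (BcB α c n w) = ker φG n z w ∧
    ker φG n z w = ker φB n z w * BcA α c n z * conj' (BcA α c n w) := by
  have := hμ.prob
  let S := {t | (piA α n).eval t ≠ 0 ∧ (piB α n).eval t ≠ 0 ∧ (piG α c n).eval t ≠ 0}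
  have hS : {t | onT t} ⊆ S := fun t ht =>
    ⟨eval_prod_ne_zero_iff.mpr fun i _ => wA_eval_ne_zero_of_onT (hα i) ht,
      eval_prod_ne_zero_iff.mpr fun i _ => wB_eval_ne_zero_of_onT (hα i) ht,
      eval_prod_ne_zero_iff.mpr fun i _ => wG_eval_ne_zero_of_onT (hα i) c ht⟩
  have hGdeg := fun k (hk : k ≤ n) => natDegree_mul_prod_Ioc_le (wG_natDegree_le α c) (hG.deg k) hk
  have hGorth :=
    hG.inn_eq_ite (wG_natDegree_le α c) fun i _ ht => wG_eval_ne_zero_of_onT (hα i) c ht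
  have hGS : ∀ k ≤ n, Set.EqOn (φG k)
      (fun t => (pG k * ∏ i ∈ Finset.Ioc k n, wG α c i).eval t / (piG α c n).eval t) S :=
    fun k hk t ht => (hG.rep k t).trans (eval_mul_prod_Ioc_div_prod_Icc hk _ ht.2.2).symm
  constructor
  · rw [← ker_mul]
    exact ker_eq_of_eqOn hμ.circ (fun t ht => (hS ht).2.2)
      (fun k hk => natDegree_C_mul_mul_prod_Ioc_le (wA_natDegree_le α) _ (hA.deg k) hk) hGdeg
      (hA.inn_mul_BcB_eq_ite hμ.circ hα) hGorth hS
      (fun k hk t ht => mul_BcB_eq_eval_div hA.rep hk ht.1 ht.2.1) hGS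
      ⟨hzA, hzB, hzG⟩ ⟨hwA, hwB, hwG⟩
  · rw [← ker_mul]
    exact (ker_eq_of_eqOn hμ.circ (fun t ht => (hS ht).2.2)
      (fun k hk => natDegree_C_mul_mul_prod_Ioc_le (wB_natDegree_le α) _ (hB.deg k) hk) hGdeg
      (hB.inn_mul_BcA_eq_ite hμ.circ hα) hGorth hS
      (fun k hk t ht => mul_BcA_eq_eval_div hB.rep hk ht.1 ht.2.1) hGS
      ⟨hzA, hzB, hzG⟩ ⟨hwA, hwB, hwG⟩).symm

/-- for all z, w off the unit circle and away from the poles,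
k_n^α(z,w)·B̌_n^β(z)·conj(B̌_n^β(w)) = k_n(z,w) = k_n^β(z,w)·B̌_n^α(z)·conj(B̌_n^α(w)). -/
theorem stmt8 (α : ℕ → ℂ) (hα0 : α 0 = 0) (hα : ∀ j, ‖α j‖ < 1)
    (c : ℕ → Bool) (μ : Measure ℂ) (hμ : CircleMeasure μ)
    (φA φB φG : ℕ → ℂ → ℂ) (pA pB pG : ℕ → Polynomial ℂ)
    (hA : IsORF μ (piA α) φA pA) (hB : IsORF μ (piB α) φB pB)
    (hG : IsORF μ (piG α c) φG pG)
    (hnA : ∀ n, normA α pA n) (hnB : ∀ n, normB α pB n) (hnG : ∀ n, normG α c pG n)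
    (n : ℕ) (z w : ℂ)
    (hz : ¬ onT z) (hw : ¬ onT w) (hz0 : z ≠ 0) (hw0 : w ≠ 0)
    (hzA : (piA α n).eval z ≠ 0) (hwA : (piA α n).eval w ≠ 0)
    (hzB : (piB α n).eval z ≠ 0) (hwB : (piB α n).eval w ≠ 0)
    (hzG : (piG α c n).eval z ≠ 0) (hwG : (piG α c n).eval w ≠ 0) :
    ker φA n z w * BcB α c n z * conj' (BcB α c n w) = ker φG n z w ∧
    ker φG n z w = ker φB n z w * BcA α c n z * conj' (BcA α c n w) :=
  stmt8_general α hα c μ hμ φA φB φG pA pB pG hA hB hG n z w hzA hwA hzB hwB hzG hwG
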